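/- Let σ ∈ S_n be a permutation, let σ̃ = (-σ(1),...,-σ(n),1) ∈ ℝ^{n+1}, and for 1 ≤ j ≤ n define u_j, v_j ∈ ℝ^n by u_j(i) = 2 if σ(i) > j and i = j, u_j(i) = 1 if σ(i) > j and i ≠ j, u_j(i) = 0 if σ(i) ≤ j; and v_j(i) = 2 if σ(i) ≥ j and i = j, v_j(i) = 1 if σ(i) ≥ j and i ≠ j, v_j(i) = 0 if σ(i) < j. Then for the lift ω_j(v) = j·∑_i v_i, the lifted endpoints ũ_j = (u_j, ω_j(u_j)) and ṽ_j = (v_j, ω_j(v_j)) satisfy ⟨σ̃, ũ_j⟩ = ⟨σ̃, ṽ_j⟩ for all j. -/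
import Mathlib


/-- `u_j(i)` (with values of `σ` and indices `j` taken 1-based in the informal statement,
which corresponds to the 0-based comparisons below): `2` if `σ(i) > j` and `i = j`,
`1` if `σ(i) > j` and `i ≠ j`, `0` if `σ(i) ≤ j`. -/
def uu {n : ℕ} (σ : Equiv.Perm (Fin n)) (j i : Fin n) : ℝ :=
  if j < σ i then (if i = j then 2 else 1) else 0

/-- `v_j(i)`: `2` if `σ(i) ≥ j` and `i = j`, `1` if `σ(i) ≥ j` and `i ≠ j`,
`0` if `σ(i) < j`. -/
def vv {n : ℕ} (σ : Equiv.Perm (Fin n)) (j i : Fin n) : ℝ :=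
  if j ≤ σ i then (if i = j then 2 else 1) else 0

/-- `⟨σ̃, ũ_j⟩ = ⟨σ̃, ṽ_j⟩`, where `σ̃ = (-σ(1),…,-σ(n),1)` and the lift of a point
`w ∈ ℝ^n` with weight index `j` is `(w, j·∑ᵢ wᵢ)` (1-based values `σ(i) = (σ i : ℕ) + 1`
and `j = (j : ℕ) + 1`). -/
theorem stmt4 {n : ℕ} (σ : Equiv.Perm (Fin n)) (j : Fin n) :
    (∑ i, (-(((σ i : ℕ) : ℝ) + 1)) * uu σ j i)
        + 1 * (((j : ℕ) : ℝ) + 1) * (∑ i, uu σ j i)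
      = (∑ i, (-(((σ i : ℕ) : ℝ) + 1)) * vv σ j i)
        + 1 * (((j : ℕ) : ℝ) + 1) * (∑ i, vv σ j i) := by
  rw [Finset.mul_sum, Finset.mul_sum, ← Finset.sum_add_distrib, ← Finset.sum_add_distrib]
  refine Finset.sum_congr rfl fun i _ => ?_
  rcases eq_or_ne (σ i) j with h | h
  · simp [h]; ring
  · have huv : uu σ j i = vv σ j i := by
      unfold uu vv
      congr 1
      exact propext ⟨le_of_lt, fun h' => lt_of_le_of_ne h' (Ne.symm h)⟩
    rw [huv]
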